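/- For every η ∈ Ω: the set T_η ⊆ ℕ² has cardinality λ_{2,n}, the map v ↦ v̄ is injective on T_η, and hence the set {v̄ : v ∈ T_η} ⊆ ℂ^{Λ_{2,n}} has cardinality λ_{2,n}. -/

import Mathlib

open Finset

/-- `Λ_{2,n}`: pairs `α ∈ ℕ²` with `1 ≤ α₁ + α₂ ≤ n`. -/
def Lam2 (n : ℕ) : Finset (ℕ × ℕ) :=
  ((range (n+1)) ×ˢ (range (n+1))).filter (fun α => 1 ≤ α.1 + α.2 ∧ α.1 + α.2 ≤ n)

/-- `v̄ ∈ ℂ^{Λ_{2,n}}`, with `α`-coordinate `C(v₁,α₁)·C(v₂,α₂)`. -/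
noncomputable def vbar (n : ℕ) (v : ℕ × ℕ) : (Lam2 n) → ℂ :=
  fun α => ((v.1.choose α.1.1 * v.2.choose α.1.2 : ℕ) : ℂ)

/-- `Λ_{3,n}`: triples `β ∈ ℕ³` with `1 ≤ β₁ + β₂ + β₃ ≤ n`. -/
def Lam3 (n : ℕ) : Finset (ℕ × ℕ × ℕ) :=
  ((range (n+1)) ×ˢ (range (n+1)) ×ˢ (range (n+1))).filter
    (fun β => 1 ≤ β.1 + β.2.1 + β.2.2 ∧ β.1 + β.2.1 + β.2.2 ≤ n)

/-- The linear map `A_n : ℕ³ → ℕ²` with matrix rows `(1,1,n)` and `(0,1,n+1)`. -/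
def Amap (n : ℕ) (β : ℕ × ℕ × ℕ) : ℕ × ℕ :=
  (β.1 + β.2.1 + n * β.2.2, β.2.1 + (n+1) * β.2.2)

/-- `c_β = Σ_{γ ≤ β} (−1)^{|β−γ|} C(β,γ) (A_nγ)‾`. -/
noncomputable def cvec (n : ℕ) (β : ℕ × ℕ × ℕ) : (Lam2 n) → ℂ :=
  ∑ γ ∈ (range (β.1+1)) ×ˢ (range (β.2.1+1)) ×ˢ (range (β.2.2+1)),
    (((-1 : ℂ) ^ ((β.1 + β.2.1 + β.2.2) - (γ.1 + γ.2.1 + γ.2.2))) *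
      ((β.1.choose γ.1 * β.2.1.choose γ.2.1 * β.2.2.choose γ.2.2 : ℕ) : ℂ)) •
      vbar n (Amap n γ)

/-- `J ∈ S_{A_n}`: `J ⊆ Λ_{3,n}`, `|J| = λ_{2,n}`, `det L^c_J ≠ 0`. -/
def memSA (n : ℕ) (J : Finset (ℕ × ℕ × ℕ)) : Prop :=
  J ⊆ Lam3 n ∧ J.card = (Lam2 n).card ∧
    ∀ e : (Lam2 n) ≃ J,
      (Matrix.of fun i j : (Lam2 n) => cvec n (e i).1 j).det ≠ 0

/-- `m_J = Σ_{β ∈ J} A_nβ`. -/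
def mJ (n : ℕ) (J : Finset (ℕ × ℕ × ℕ)) : ℕ × ℕ := ∑ β ∈ J, Amap n β

/-- `f_k(v) = k·v₁ + (1−k)·v₂`. -/
def fk (k : ℕ) (v : ℕ × ℕ) : ℤ := (k : ℤ) * v.1 + (1 - (k : ℤ)) * v.2

/-- Data of a sequence `η = (z, d₀, d₁, …, d_r)`. -/
structure OmegaData where
  r : ℕ
  z : Bool
  d : ℕ → ℕ

/-- `η ∈ Ω`: `d₀ = 0`, `d_i ≥ 1` for `1 ≤ i ≤ r` (and `d_i = 0` beyond `r`),
and `d₀ + ⋯ + d_r = n`. -/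
def OmegaData.IsOmega (n : ℕ) (η : OmegaData) : Prop :=
  η.d 0 = 0 ∧ (∀ i, 1 ≤ i → i ≤ η.r → 1 ≤ η.d i) ∧
  (∀ i, η.r < i → η.d i = 0) ∧
  (∑ i ∈ range (η.r + 1), η.d i) = n

/-- The unique `t` with `Σ_{i=0}^{t−1} d_i < j ≤ Σ_{i=0}^{t} d_i`. -/
noncomputable def tIdx (η : OmegaData) (j : ℕ) : ℕ :=
  sInf {t | j ≤ ∑ i ∈ range (t+1), η.d i}

/-- The vector `v_{j,η} ∈ ℕ²`. -/
noncomputable def vvec (η : OmegaData) (j : ℕ) : ℕ × ℕ :=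
  let t := tIdx η j
  let c := j - ∑ i ∈ range t, η.d i
  let a := (∑ i ∈ range t, if (Odd i ↔ Odd t) then η.d i else 0) + c
  if (η.z = true) ↔ Odd t then (a, 0) else (0, a)

/-- `T_{j,η}` for `1 ≤ j ≤ n`, and `T_{0,η} = {(1,1),…,(n,n)}`. -/
noncomputable def Tj (n : ℕ) (η : OmegaData) (j : ℕ) : Finset (ℕ × ℕ) :=
  if j = 0 then (range n).image (fun q => (q+1, q+1))
  else (range (n - j + 1)).image (fun p => vvec η j + (p, p))

/-- `T_η = ⋃_{j=0}^{n} T_{j,η}`. -/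
noncomputable def Tset (n : ℕ) (η : OmegaData) : Finset (ℕ × ℕ) :=
  (range (n+1)).biUnion (fun j => Tj n η j)

/-- `r_{i,η} = n·π₂(v_{i,η})`. -/
noncomputable def rshift (n : ℕ) (η : OmegaData) (i : ℕ) : ℕ := n * (vvec η i).2

/-- `T'_η = T_{0,η} ∪ ⋃_{i=1}^{n} (T_{i,η} + r_{i,η})`. -/
noncomputable def Tset' (n : ℕ) (η : OmegaData) : Finset (ℕ × ℕ) :=
  Tj n η 0 ∪ (Finset.Icc 1 n).biUnion
    (fun i => (Tj n η i).image (fun v => v + (rshift n η i, rshift n η i)))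

/-- `J_η`: the (unique) subset of `Λ_{3,n}` with `A_n(J_η) = T'_η`. -/
noncomputable def Jset (n : ℕ) (η : OmegaData) : Finset (ℕ × ℕ × ℕ) :=
  (Lam3 n).filter (fun β => Amap n β ∈ Tset' n η)

/-- `z_k = 1` iff `f_k((1,0)) ≤ f_k((n,n+1))`. -/
def zk (n k : ℕ) : Bool := decide (fk k (1, 0) ≤ fk k (n, n+1))

/-- `t_l` in the recursive definition of `η_k`, where `O`, `E` are the odd- and
even-indexed partial sums `Σ_{j<l, j odd} d_{k,j}` and `Σ_{j<l, j even} d_{k,j}`. -/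
noncomputable def tval (n k : ℕ) (l O E : ℕ) : ℕ :=
  let w := (if Odd l then E else O) + 1
  if ((zk n k = true) ↔ Odd l) then
    sSup {m : ℕ | (m : ℤ) * fk k (1, 0) ≤ fk k (w * n, w * (n+1))}
  else
    sSup {m : ℕ | (m : ℤ) * fk k (n, n+1) ≤ fk k (w, 0)}

/-- The pair `(Σ_{j≤l, j odd} d_{k,j}, Σ_{j≤l, j even} d_{k,j})` of the recursion
defining `η_k`. -/
noncomputable def oeSums (n k : ℕ) : ℕ → ℕ × ℕ
  | 0 => (0, 0)
  | l + 1 =>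
    let p := oeSums n k l
    let O := p.1
    let E := p.2
    let S := O + E
    let dnext := if S < n then
        min (n - S) (tval n k (l+1) O E - (if Odd (l+1) then O else E))
      else 0
    if Odd (l+1) then (O + dnext, E) else (O, E + dnext)

/-- `d_{k,l}`. -/
noncomputable def dk (n k : ℕ) : ℕ → ℕ
  | 0 => 0
  | l + 1 =>
    let p := oeSums n k l
    let O := p.1
    let E := p.2
    let S := O + E
    if S < n then
      min (n - S) (tval n k (l+1) O E - (if Odd (l+1) then O else E))
    else 0

/-- `η_k = (z_k, d_{k,0}, …, d_{k,r})`, where `r` is the first index with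
`Σ_{j=0}^{r} d_{k,j} = n`. -/
noncomputable def etak (n k : ℕ) : OmegaData :=
  { r := sInf {r | ∑ j ∈ range (r+1), dk n k j = n},
    z := zk n k,
    d := dk n k }


/-!
For `j ≥ 1`, `T_{j,η}` is the diagonal ray of `n - j + 1` points issuing from `v_{j,η}`, a nonzero
point of a coordinate axis, and `T_{0,η}` is the diagonal ray of `n` points issuing from the origin.
The `v_{j,η}` are pairwise distinct: the two branches of the definition put them on different axes,
and along one axis the nonzero coordinate strictly increases with `j`. As every point of `ℕ²` lies on
the diagonal ray of exactly one axis point, the rays are disjoint and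
`|T_η| = n + Σ_{j=1}^{n} (n - j + 1) = Σ_{k=1}^{n} (k + 1) = λ_{2,n}`.
The map `v ↦ v̄` is injective on all of `ℕ²`: the coordinates of `v̄` at `(1,0)` and `(0,1)` are
`v₁` and `v₂`.
-/

lemma eq_of_add_diag_eq {u v : ℕ × ℕ} (hu : u.1 = 0 ∨ u.2 = 0) (hv : v.1 = 0 ∨ v.2 = 0)
    {p q : ℕ} (h : u + (p, p) = v + (q, q)) : u = v := by
  simp only [Prod.ext_iff, Prod.fst_add, Prod.snd_add] at h ⊢
  omega

lemma sum_range_parity_add_le (d : ℕ → ℕ) {t t' : ℕ} (hlt : t < t') (hpar : Odd t ↔ Odd t') :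
    (∑ i ∈ range t, if (Odd i ↔ Odd t) then d i else 0) + d t ≤
      ∑ i ∈ range t', if (Odd i ↔ Odd t') then d i else 0 := by
  simp only [hpar]
  calc (∑ i ∈ range t, if (Odd i ↔ Odd t') then d i else 0) + d t
      = ∑ i ∈ range (t + 1), if (Odd i ↔ Odd t') then d i else 0 := by
        rw [sum_range_succ, if_pos hpar]
    _ ≤ ∑ i ∈ range t', if (Odd i ↔ Odd t') then d i else 0 :=
        sum_le_sum_of_subset (range_subset_range.2 hlt)

section VVec

variable (η : OmegaData)

lemma le_sum_range_tIdx_succ {j : ℕ} (hj : j ≤ ∑ i ∈ range (η.r + 1), η.d i) :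
    j ≤ ∑ i ∈ range (tIdx η j + 1), η.d i :=
  Nat.sInf_mem (s := {t | j ≤ ∑ i ∈ range (t + 1), η.d i}) ⟨η.r, hj⟩

lemma sum_range_tIdx_lt {j : ℕ} (hj : 1 ≤ j) : ∑ i ∈ range (tIdx η j), η.d i < j := by
  cases ht : tIdx η j with
  | zero => simp only [range_zero, sum_empty]; omega
  | succ s =>
    have hs : s ∉ {t | j ≤ ∑ i ∈ range (t + 1), η.d i} :=
      Nat.notMem_of_lt_sInf (by unfold tIdx at ht; omega)
    simpa using hs

lemma tIdx_mono {j j' : ℕ} (hjj' : j ≤ j') (hj' : j' ≤ ∑ i ∈ range (η.r + 1), η.d i) :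
    tIdx η j ≤ tIdx η j' :=
  Nat.sInf_le (hjj'.trans (le_sum_range_tIdx_succ η hj'))

noncomputable def vvecCoord (j : ℕ) : ℕ :=
  (∑ i ∈ range (tIdx η j), if (Odd i ↔ Odd (tIdx η j)) then η.d i else 0)
    + (j - ∑ i ∈ range (tIdx η j), η.d i)

lemma vvec_eq (j : ℕ) :
    vvec η j = if (η.z = true) ↔ Odd (tIdx η j) then (vvecCoord η j, 0)
      else (0, vvecCoord η j) :=
  rfl

lemma one_le_vvecCoord {j : ℕ} (hj : 1 ≤ j) : 1 ≤ vvecCoord η j := by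
  have := sum_range_tIdx_lt η hj
  unfold vvecCoord
  omega

lemma vvec_ne_zero {j : ℕ} (hj : 1 ≤ j) : vvec η j ≠ 0 := by
  have := one_le_vvecCoord η hj
  rw [vvec_eq]
  split_ifs <;> simp only [ne_eq, Prod.ext_iff, Prod.fst_zero, Prod.snd_zero] <;> omega

lemma vvecCoord_lt {j j' : ℕ} (hj : 1 ≤ j) (hjj' : j < j')
    (hj' : j' ≤ ∑ i ∈ range (η.r + 1), η.d i) (hpar : Odd (tIdx η j) ↔ Odd (tIdx η j')) :
    vvecCoord η j < vvecCoord η j' := by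
  have hj_le := le_sum_range_tIdx_succ η (hjj'.le.trans hj')
  have hj'_gt := sum_range_tIdx_lt η (hj.trans hjj'.le)
  unfold vvecCoord
  rcases (tIdx_mono η hjj'.le hj').eq_or_lt with heq | hlt
  · rw [← heq] at hj'_gt ⊢
    omega
  · have := sum_range_parity_add_le η.d hlt hpar
    rw [sum_range_succ] at hj_le
    omega

lemma vvec_ne_of_lt {j j' : ℕ} (hj : 1 ≤ j) (hjj' : j < j')
    (hj' : j' ≤ ∑ i ∈ range (η.r + 1), η.d i) : vvec η j ≠ vvec η j' := by
  have hpos := one_le_vvecCoord η hj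
  have hpos' := one_le_vvecCoord η (hj.trans hjj'.le)
  rw [vvec_eq, vvec_eq]
  split_ifs with hside hside'
  · have := vvecCoord_lt η hj hjj' hj' (hside.symm.trans hside')
    simp only [ne_eq, Prod.ext_iff]
    omega
  · simp only [ne_eq, Prod.ext_iff]
    omega
  · simp only [ne_eq, Prod.ext_iff]
    omega
  · have := vvecCoord_lt η hj hjj' hj' (by tauto)
    simp only [ne_eq, Prod.ext_iff]
    omega

noncomputable def rayOrigin (j : ℕ) : ℕ × ℕ := if j = 0 then 0 else vvec η j

lemma rayOrigin_mem_axes (j : ℕ) : (rayOrigin η j).1 = 0 ∨ (rayOrigin η j).2 = 0 := by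
  unfold rayOrigin
  rw [vvec_eq]
  split_ifs <;> simp

lemma rayOrigin_injOn :
    Set.InjOn (rayOrigin η) (Set.Iic (∑ i ∈ range (η.r + 1), η.d i)) := by
  have key : ∀ j j', j < j' → j' ≤ ∑ i ∈ range (η.r + 1), η.d i →
      rayOrigin η j ≠ rayOrigin η j' := by
    intro j j' hjj' hj'
    unfold rayOrigin
    rw [if_neg (by omega : j' ≠ 0)]
    split_ifs
    · exact (vvec_ne_zero η (by omega)).symm
    · exact vvec_ne_of_lt η (by omega) hjj' hj'
  intro j hj j' hj' h
  rcases lt_trichotomy j j' with hlt | heq | hgt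
  · exact absurd h (key j j' hlt hj')
  · exact heq
  · exact absurd h.symm (key j' j hgt hj)

end VVec

section TSet

variable (n : ℕ) (η : OmegaData)

lemma exists_eq_rayOrigin_add_of_mem_Tj {j : ℕ} {x : ℕ × ℕ} (hx : x ∈ Tj n η j) :
    ∃ p : ℕ, x = rayOrigin η j + (p, p) := by
  unfold Tj at hx
  unfold rayOrigin
  split_ifs at hx ⊢
  · obtain ⟨q, -, rfl⟩ := mem_image.1 hx
    exact ⟨q + 1, by simp⟩
  · obtain ⟨p, -, rfl⟩ := mem_image.1 hx
    exact ⟨p, rfl⟩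

lemma pairwiseDisjoint_Tj (hη : ∑ i ∈ range (η.r + 1), η.d i = n) :
    ((range (n + 1) : Finset ℕ) : Set ℕ).PairwiseDisjoint (Tj n η) := by
  intro j hj j' hj' hne
  refine disjoint_left.2 fun x hx hx' => hne ?_
  obtain ⟨p, rfl⟩ := exists_eq_rayOrigin_add_of_mem_Tj n η hx
  obtain ⟨p', hp'⟩ := exists_eq_rayOrigin_add_of_mem_Tj n η hx'
  have hsame := eq_of_add_diag_eq (rayOrigin_mem_axes η j) (rayOrigin_mem_axes η j') hp'
  simp only [coe_range, Set.mem_Iio] at hj hj'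
  exact rayOrigin_injOn η (Set.mem_Iic.2 (by omega)) (Set.mem_Iic.2 (by omega)) 
    hsame

lemma card_Tj_zero : (Tj n η 0).card = n := by
  rw [Tj, if_pos rfl, card_image_of_injective _ (fun a b hab => by simpa using hab), card_range]

lemma card_Tj_of_ne_zero {j : ℕ} (hj : j ≠ 0) : (Tj n η j).card = n - j + 1 := by
  rw [Tj, if_neg hj, card_image_of_injective _ (fun a b hab => by simpa using hab), card_range]

lemma card_Tset (hη : ∑ i ∈ range (η.r + 1), η.d i = n) :
    (Tset n η).card = ∑ i ∈ range n, (n - i) + n := by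
  rw [Tset, card_biUnion (pairwiseDisjoint_Tj n η hη), sum_range_succ', card_Tj_zero]
  congr 1
  exact sum_congr rfl fun i hi => by
    rw [card_Tj_of_ne_zero n η i.succ_ne_zero]
    simp only [mem_range] at hi
    omega

end TSet

lemma Lam2_eq_biUnion_antidiagonal (n : ℕ) :
    Lam2 n = (range n).biUnion fun i => antidiagonal (i + 1) := by
  ext α
  simp only [Lam2, mem_filter, mem_product, mem_range, mem_biUnion,
    HasAntidiagonal.mem_antidiagonal]
  constructor
  · rintro ⟨-, h1, h2⟩
    exact ⟨α.1 + α.2 - 1, by omega, by omega⟩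
  · rintro ⟨i, hi, h⟩
    omega

lemma card_Lam2 (n : ℕ) : (Lam2 n).card = ∑ i ∈ range n, (i + 2) := by
  rw [Lam2_eq_biUnion_antidiagonal, card_biUnion]
  · simp
  · intro i _ j _ hij
    refine disjoint_left.2 fun x hx hx' => hij ?_
    rw [HasAntidiagonal.mem_antidiagonal] at hx hx'
    omega

lemma sum_range_sub_add_self (n : ℕ) :
    ∑ i ∈ range n, (n - i) + n = ∑ i ∈ range n, (i + 2) := by
  have hreflect : ∑ i ∈ range n, (n - i) = ∑ i ∈ range n, (i + 1) := by
    rw [← sum_range_reflect (fun i => i + 1)]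
    exact sum_congr rfl fun i hi => by simp only [mem_range] at hi; omega
  simp only [hreflect, sum_add_distrib, sum_const, card_range, smul_eq_mul]
  ring

lemma vbar_injective (n : ℕ) (hn : 1 ≤ n) : Function.Injective (vbar n) := by
  intro u v h
  have h10 : ((1, 0) : ℕ × ℕ) ∈ Lam2 n := by simp only [Lam2, mem_filter, mem_product, mem_range]; omega
  have h01 : ((0, 1) : ℕ × ℕ) ∈ Lam2 n := by simp only [Lam2, mem_filter, mem_product, mem_range]; omega
  have e1 := congrFun h ⟨(1, 0), h10⟩
  have e2 := congrFun h ⟨(0, 1), h01⟩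
  simp only [vbar, Nat.choose_one_right, Nat.choose_zero_right, mul_one, one_mul,
    Nat.cast_inj] at e1 e2
  exact Prod.ext e1 e2

theorem stmt8 (n : ℕ) (hn : 1 ≤ n) (η : OmegaData) (hη : η.IsOmega n) :
    (Tset n η).card = (Lam2 n).card ∧
    Set.InjOn (vbar n) ↑(Tset n η) ∧
    (vbar n '' ↑(Tset n η)).ncard = (Lam2 n).card := by
  have hinj : Set.InjOn (vbar n) ↑(Tset n η) := (vbar_injective n hn).injOn
  have hcard : (Tset n η).card = (Lam2 n).card := by
    rw [card_Tset n η hη.2.2.2, card_Lam2, sum_range_sub_add_self]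
  exact ⟨hcard, hinj, by rw [hinj.ncard_image, Set.ncard_coe_finset, hcard]⟩
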